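/- arXiv:2102.07965 — 2 statements merged into one kernel-verified Lean document; each statement's English description precedes it below -/
import Mathlib

section
/- The generating function for partitions with distinct odd parts, refined by residue class mod 4 (tracking parts ≡1 mod 4 by s₁, adding r₀ at each ≡2 step, s₀ at ≡3, r₁ at ≡0), equals ((1+s₁)∏_{m≥1}(1+Q^m s₁)(1+Q^m r₁^{-1})) / ((1-r₀s₁)∏_{m≥1}(1-Q^m)(1-r₀s₁Q^m)) where Q = r₀s₀r₁s₁. That is, under the substitution q^{4m+1}↦Q^m s₁, q^{4m+2}↦Q^m s₁r₀, q^{4m+3}↦Q^m s₁r₀s₀, q^{4m+4}↦Q^{m+1}, the generating function ∏_{n≥1}(1+q^{2n-1})/(1-q^{2n}) becomes the stated expression. -/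
/-!
Each factor of the product is the indicator series of the multiples of a single monomial: a part
size `k` contributes `1 + X^{wtexp k}` if `k` is odd (multiplicity `0` or `1`) and
`(1 - X^{wtexp k})⁻¹` if `k` is even (any multiplicity). Choosing a multiplicity for every part
size is choosing a partition, so the coefficient of `X^d` counts the partitions with distinct odd
parts and weight `d`. As `wtexp k` has total degree `k`, these are partitions of `n = |d|`, and all
their parts are among the part sizes `1, …, 4N + 2` of the truncated product.
-/

namespace RefinedGF

open MvPowerSeries

/-- The tracking variables: `s₁ = X 0`, `r₀ = X 1`, `s₀ = X 2`, `r₁ = X 3`. -/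
noncomputable def s₁ : MvPowerSeries (Fin 4) ℚ := MvPowerSeries.X 0
noncomputable def r₀ : MvPowerSeries (Fin 4) ℚ := MvPowerSeries.X 1
noncomputable def s₀ : MvPowerSeries (Fin 4) ℚ := MvPowerSeries.X 2
noncomputable def r₁ : MvPowerSeries (Fin 4) ℚ := MvPowerSeries.X 3

/-- `Q = s₁ r₀ s₀ r₁`. -/
noncomputable def Qv : MvPowerSeries (Fin 4) ℚ := s₁ * r₀ * s₀ * r₁

/-- The weight exponent of a part of size `k`: the variable indexed by `i` (with
`s₁, r₀, s₀, r₁` tracking residues `1, 2, 3, 0` mod `4`) receives the number of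
integers `1 ≤ j ≤ k` with `j ≡ i+1 (mod 4)`.  Thus a part of size `4m+1` has weight
`Q^m s₁`, `4m+2 ↦ Q^m s₁r₀`, `4m+3 ↦ Q^m s₁r₀s₀` and `4m+4 ↦ Q^{m+1}`. -/
noncomputable def wtexp (k : ℕ) : Fin 4 →₀ ℕ :=
  Finsupp.equivFunOnFinite.symm
    (fun i => ((Finset.Icc 1 k).filter (fun j => j % 4 = (i.val + 1) % 4)).card)

end RefinedGF

open Finset

theorem Finsupp.degree_nsmul_div {σ : Type*} {x : σ →₀ ℕ} {i : ℕ} (hx : x.degree = i) (hi : i ≠ 0)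
    (m : ℕ) : (m • x).degree / i = m := by
  rw [map_nsmul, hx, smul_eq_mul, Nat.mul_div_cancel _ (Nat.pos_of_ne_zero hi)]

theorem Finsupp.mem_range_nsmul_iff_of_ne_zero {σ : Type*} {e d : σ →₀ ℕ} (hd : d ≠ 0) :
    d ∈ Set.range (fun m : ℕ => m • e) ↔ e ≤ d ∧ d - e ∈ Set.range (fun m : ℕ => m • e) := by
  constructor
  · rintro ⟨_ | m, rfl⟩
    · exact absurd (zero_smul ℕ e) hd
    · exact ⟨by simp [succ_nsmul], m, by simp [succ_nsmul]⟩
  · rintro ⟨hle, m, hm⟩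
    exact ⟨m + 1, by simp only [succ_nsmul, hm, tsub_add_cancel_of_le hle]⟩

namespace MvPowerSeries

variable {σ R : Type*}

noncomputable def indicator [Semiring R] (S : Set (σ →₀ ℕ)) : MvPowerSeries σ R := S.indicator 1

open Classical in
theorem coeff_indicator [Semiring R] (S : Set (σ →₀ ℕ)) (d : σ →₀ ℕ) :
    coeff d (indicator S : MvPowerSeries σ R) = if d ∈ S then 1 else 0 :=
  Set.indicator_apply S 1 d

open Classical in
theorem coeff_prod_indicator {ι : Type*} [CommSemiring R] [DecidableEq ι] [DecidableEq σ]
    (s : Finset ι) (S : ι → Set (σ →₀ ℕ)) (d : σ →₀ ℕ) :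
    coeff d (∏ i ∈ s, indicator (S i) : MvPowerSeries σ R) =
      #{l ∈ s.finsuppAntidiag d | ∀ i ∈ s, l i ∈ S i} := by
  rw [coeff_prod]
  simp_rw [coeff_indicator, prod_boole, sum_boole]

theorem one_add_monomial_eq_indicator [Semiring R] {e : σ →₀ ℕ} (he : e ≠ 0) :
    1 + monomial e 1 = (indicator {0, e} : MvPowerSeries σ R) := by
  classical
  ext d
  rw [map_add, coeff_one, coeff_monomial, coeff_indicator, Set.mem_insert_iff,
    Set.mem_singleton_iff]
  by_cases h0 : d = 0
  · simp [h0, he.symm]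
  · simp [h0]

theorem inv_one_sub_monomial_eq_indicator {k : Type*} [Field k] {e : σ →₀ ℕ} (he : e ≠ 0) :
    (1 - monomial e 1)⁻¹ = (indicator (Set.range (fun m : ℕ => m • e)) : MvPowerSeries σ k) := by
  classical
  have hunit : constantCoeff (1 - monomial e 1 : MvPowerSeries σ k) ≠ 0 := by
    rw [map_sub, map_one, ← coeff_zero_eq_constantCoeff_apply, coeff_monomial, if_neg he.symm,
      sub_zero]
    exact one_ne_zero
  rw [MvPowerSeries.inv_eq_iff_mul_eq_one hunit]
  ext d
  rw [mul_sub, mul_one, map_sub, coeff_mul_monomial, mul_one, coeff_one, coeff_indicator]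
  by_cases hd : d = 0
  · have hle : ¬ e ≤ d := by rwa [hd, nonpos_iff_eq_zero]
    rw [if_pos ⟨0, hd ▸ zero_smul ℕ e⟩, if_neg hle, if_pos hd, sub_zero]
  · rw [Finsupp.mem_range_nsmul_iff_of_ne_zero hd, if_neg hd]
    by_cases hle : e ≤ d <;> simp [hle, coeff_indicator]

end MvPowerSeries

open Finsupp

namespace Multiset

variable {σ : Type*} (w : ℕ → σ →₀ ℕ)

noncomputable def weightsByPart (μ : Multiset ℕ) : ℕ →₀ (σ →₀ ℕ) :=
  (μ.map fun i => single i (w i)).sum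

theorem weightsByPart_apply (μ : Multiset ℕ) (i : ℕ) :
    weightsByPart w μ i = μ.count i • w i := by
  induction μ using Multiset.induction_on with
  | empty => simp [weightsByPart]
  | cons j μ ih =>
    rw [weightsByPart, map_cons, sum_cons, Finsupp.add_apply, ← weightsByPart, ih, count_cons,
      single_apply, add_smul]
    by_cases h : j = i
    · simp [h, add_comm]
    · simp [h, Ne.symm h]

theorem support_weightsByPart_subset (μ : Multiset ℕ) :
    (weightsByPart w μ).support ⊆ μ.toFinset := by
  intro i hi
  rw [Finsupp.mem_support_iff, weightsByPart_apply] at hi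
  exact mem_toFinset.mpr (count_ne_zero.mp fun h => hi (by rw [h, zero_smul]))

theorem sum_weightsByPart {μ : Multiset ℕ} {s : Finset ℕ} (hμ : ∀ i ∈ μ, i ∈ s) :
    ∑ i ∈ s, weightsByPart w μ i = (μ.map w).sum :=
  calc ∑ i ∈ s, weightsByPart w μ i = ∑ i ∈ s, μ.count i • w i :=
        Finset.sum_congr rfl fun i _ => weightsByPart_apply w μ i
    _ = ∑ i ∈ μ.toFinset, μ.count i • w i := by
        refine (Finset.sum_subset (fun i hi => hμ i (mem_toFinset.mp hi)) fun i _ hi => ?_).symm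
        rw [count_eq_zero.mpr (fun h => hi (mem_toFinset.mpr h)), zero_smul]
    _ = (μ.map w).sum := (Finset.sum_multiset_map_count μ w).symm

variable {w}

-- At `i = 0` this holds because `0 ∉ μ` and `x / 0 = 0`.
theorem count_eq_degree_weightsByPart_div (hw : ∀ i, (w i).degree = i) {μ : Multiset ℕ}
    (hμ : 0 ∉ μ) (i : ℕ) : μ.count i = (weightsByPart w μ i).degree / i := by
  rw [weightsByPart_apply]
  rcases eq_or_ne i 0 with rfl | hi
  · rw [count_eq_zero.mpr hμ, Nat.div_zero]
  · rw [Finsupp.degree_nsmul_div (hw i) hi]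

end Multiset

namespace Nat.Partition

variable {σ : Type*} {w : ℕ → σ →₀ ℕ} {n : ℕ} {s : Finset ℕ} {d : σ →₀ ℕ}

theorem exists_weightsByPart_eq [DecidableEq σ] (hw : ∀ i, (w i).degree = i) (hs0 : 0 ∉ s)
    (hd : d.degree = n) {l : ℕ →₀ (σ →₀ ℕ)} (hl : l ∈ s.finsuppAntidiag d)
    (hmul : ∀ i ∈ s, ∃ m : ℕ, m • w i = l i) :
    ∃ p : n.Partition, p.parts.weightsByPart w = l := by
  rw [mem_finsuppAntidiag] at hl
  have hlm : ∀ i ∈ s, ((l i).degree / i) • w i = l i := by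
    intro i hi
    obtain ⟨m, hm⟩ := hmul i hi
    rw [← hm, Finsupp.degree_nsmul_div (hw i) (ne_of_mem_of_not_mem hi hs0)]
  set μ := ∑ i ∈ s, Multiset.replicate ((l i).degree / i) i
  have hcount : ∀ j, μ.count j • w j = l j := by
    intro j
    rw [Multiset.count_sum', sum_congr rfl fun i _ => Multiset.count_replicate j i _,
      Finset.sum_ite_eq']
    split_ifs with hj
    · exact hlm j hj
    · rw [zero_smul, Finsupp.notMem_support_iff.mp fun h => hj (hl.2 h)]
  have hμ : ∀ i ∈ μ, i ∈ s := by
    intro i hi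
    obtain ⟨j, hj, hij⟩ := Multiset.mem_sum.mp hi
    rwa [Multiset.eq_of_mem_replicate hij]
  refine ⟨⟨μ, fun hi => Nat.pos_of_ne_zero (ne_of_mem_of_not_mem (hμ _ hi) hs0), ?_⟩, ?_⟩
  · rw [← hd, ← hl.1, map_sum, Multiset.sum_sum]
    refine sum_congr rfl fun i hi => ?_
    conv_rhs => rw [← hlm i hi, map_nsmul, hw]
    rw [Multiset.sum_replicate]
  · ext1 j
    rw [Multiset.weightsByPart_apply, hcount]

open Classical in
theorem card_filter_eq_card_filter_finsuppAntidiag (hw : ∀ i, (w i).degree = i)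
    (hs0 : 0 ∉ s) (hs : Icc 1 n ⊆ s) (hd : d.degree = n) (c : ℕ → Set ℕ)
    (hc : ∀ i ∉ s, 0 ∈ c i) :
    #{p : n.Partition | (∀ i, p.parts.count i ∈ c i) ∧ (p.parts.map w).sum = d} =
      #{l ∈ s.finsuppAntidiag d | ∀ i ∈ s, l i ∈ (fun m : ℕ => m • w i) '' c i} := by
  have hparts (p : n.Partition) : ∀ i ∈ p.parts, i ∈ s :=
    fun i hi => hs (mem_Icc.mpr ⟨p.parts_pos hi, p.le_of_mem_parts hi⟩)
  have hcount (p : n.Partition) (i : ℕ) :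
      p.parts.count i = (p.parts.weightsByPart w i).degree / i :=
    Multiset.count_eq_degree_weightsByPart_div hw (fun h => (p.parts_pos h).false) i
  refine card_bij (fun p _ => p.parts.weightsByPart w) ?_ ?_ ?_
  · intro p hp
    simp only [mem_filter, mem_univ, true_and] at hp
    refine mem_filter.mpr ⟨mem_finsuppAntidiag.mpr ⟨?_, ?_⟩, fun i _ => ?_⟩
    · rw [Multiset.sum_weightsByPart w (hparts p), hp.2]
    · exact (Multiset.support_weightsByPart_subset w _).trans
        fun i hi => hparts p i (Multiset.mem_toFinset.mp hi)
    · exact ⟨_, hp.1 i, (Multiset.weightsByPart_apply w _ i).symm⟩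
  · intro p _ q _ hpq
    exact Nat.Partition.ext (Multiset.ext.mpr fun i => by rw [hcount p, hcount q, hpq])
  · intro l hl
    obtain ⟨hl, himg⟩ := mem_filter.mp hl
    obtain ⟨p, rfl⟩ := exists_weightsByPart_eq hw hs0 hd hl fun i hi =>
      (himg i hi).imp fun _ h => h.2
    refine ⟨p, mem_filter.mpr ⟨mem_univ _, fun i => ?_, ?_⟩, rfl⟩
    · by_cases hi : i ∈ s
      · obtain ⟨m, hm, hmi⟩ := himg i hi
        rwa [hcount p, ← hmi, Finsupp.degree_nsmul_div (hw i) (ne_of_mem_of_not_mem hi hs0)]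
      · rw [Multiset.count_eq_zero.mpr fun h => hi (hparts p i h)]
        exact hc i hi
    · rw [← Multiset.sum_weightsByPart w (hparts p), (mem_finsuppAntidiag.mp hl).1]

theorem coeff_prod_indicator_eq_card {R : Type*} [CommSemiring R] (hw : ∀ i, (w i).degree = i)
    (hs0 : 0 ∉ s) (hs : Icc 1 n ⊆ s) (hd : d.degree = n) (c : ℕ → Set ℕ)
    (hc : ∀ i ∉ s, 0 ∈ c i) :
    MvPowerSeries.coeff d
        (∏ i ∈ s, MvPowerSeries.indicator ((fun m : ℕ => m • w i) '' c i) : MvPowerSeries σ R) =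
      Nat.card {p : n.Partition // (∀ i, p.parts.count i ∈ c i) ∧ (p.parts.map w).sum = d} := by
  classical
  rw [MvPowerSeries.coeff_prod_indicator, Nat.card_eq_fintype_card, Fintype.card_subtype,
    card_filter_eq_card_filter_finsuppAntidiag hw hs0 hs hd c hc]

end Nat.Partition

namespace RefinedGF

open MvPowerSeries

theorem wtexp_apply (k : ℕ) (i : Fin 4) : wtexp k i = (k + 3 - i) / 4 := by
  induction k with
  | zero => fin_cases i <;> rfl
  | succ k ih =>
    have hstep : wtexp (k + 1) i = wtexp k i + if (k + 1) % 4 = (i + 1) % 4 then 1 else 0 := by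
      simp only [wtexp, Finsupp.coe_equivFunOnFinite_symm, card_filter]
      exact sum_Icc_succ_top (by omega) _
    rw [hstep, ih]
    have := i.isLt
    split_ifs <;> omega

theorem degree_wtexp (k : ℕ) : (wtexp k).degree = k := by
  rw [Finsupp.degree_eq_sum, Fin.sum_univ_four]
  simp only [wtexp_apply]
  omega

theorem wtexp_add_four (k : ℕ) : wtexp (k + 4) = wtexp k + wtexp 4 := by
  ext i
  simp only [Finsupp.add_apply, wtexp_apply]
  have := i.isLt
  omega

noncomputable def partWeight (k : ℕ) : MvPowerSeries (Fin 4) ℚ := monomial (wtexp k) 1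

theorem s₁_eq : s₁ = partWeight 1 := by
  rw [s₁, X_def, partWeight]
  congr 2
  ext i; fin_cases i <;> simp [wtexp_apply]

theorem r₀_mul_s₁_eq : r₀ * s₁ = partWeight 2 := by
  rw [r₀, s₁, X_def, X_def, partWeight, monomial_mul_monomial, one_mul]
  congr 2
  ext i; fin_cases i <;> simp [wtexp_apply]

theorem s₁_mul_r₀_mul_s₀_eq : s₁ * r₀ * s₀ = partWeight 3 := by
  rw [s₁, r₀, s₀, X_def, X_def, X_def, partWeight, monomial_mul_monomial, monomial_mul_monomial,
    one_mul, one_mul]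
  congr 2
  ext i; fin_cases i <;> simp [wtexp_apply]

theorem Qv_eq : Qv = partWeight 4 := by
  rw [Qv, s₁, r₀, s₀, r₁, X_def, X_def, X_def, X_def, partWeight, monomial_mul_monomial,
    monomial_mul_monomial, monomial_mul_monomial, one_mul, one_mul, one_mul]
  congr 2
  ext i; fin_cases i <;> simp [wtexp_apply]

theorem Qv_pow_mul_partWeight (m k : ℕ) : Qv ^ m * partWeight k = partWeight (4 * m + k) := by
  induction m with
  | zero => simp
  | succ m ih =>
    rw [pow_succ', mul_assoc, ih, Qv_eq, partWeight, partWeight, partWeight, monomial_mul_monomial,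
      one_mul, add_comm, ← wtexp_add_four]
    ring_nf

noncomputable def partFactor (k : ℕ) : MvPowerSeries (Fin 4) ℚ :=
  if Odd k then 1 + partWeight k else (1 - partWeight k)⁻¹

def allowedCounts (k : ℕ) : Set ℕ := if Odd k then {0, 1} else Set.univ

theorem mem_allowedCounts {k m : ℕ} : m ∈ allowedCounts k ↔ (Odd k → m ≤ 1) := by
  unfold allowedCounts
  split_ifs with hk
  · simp only [Set.mem_insert_iff, Set.mem_singleton_iff, hk, true_imp_iff]
    omega
  · simp [hk]

theorem partFactor_eq_indicator {k : ℕ} (hk : k ≠ 0) :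
    partFactor k = indicator ((fun m : ℕ => m • wtexp k) '' allowedCounts k) := by
  have hne : wtexp k ≠ 0 := fun h => hk (by rw [← degree_wtexp k, h, map_zero])
  unfold partFactor allowedCounts
  split_ifs
  · rw [Set.image_pair, zero_smul, one_smul]
    exact one_add_monomial_eq_indicator hne
  · rw [Set.image_univ]
    exact inv_one_sub_monomial_eq_indicator hne

theorem truncated_gf_eq_prod_partFactor (N : ℕ) :
    (1 + s₁) *
        (∏ m ∈ range N, ((1 + Qv ^ (m + 1) * s₁) * (1 + Qv ^ m * (s₁ * r₀ * s₀)))) *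
        ((1 - r₀ * s₁) *
          ∏ m ∈ range N, ((1 - Qv ^ (m + 1)) * (1 - Qv ^ (m + 1) * (r₀ * s₁))))⁻¹ =
      ∏ k ∈ Icc 1 (4 * N + 2), partFactor k := by
  have hodd {k : ℕ} (hk : k % 2 = 1) : partFactor k = 1 + partWeight k :=
    if_pos (Nat.odd_iff.mpr hk)
  have heven {k : ℕ} (hk : k % 2 = 0) : partFactor k = (1 - partWeight k)⁻¹ :=
    if_neg (Nat.not_odd_iff.mpr hk)
  induction N with
  | zero =>
    rw [prod_Icc_succ_top (by norm_num), Icc_self, prod_singleton, hodd rfl, heven rfl]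
    simp only [prod_range_zero, mul_one]
    rw [r₀_mul_s₁_eq, s₁_eq]
  | succ N ih =>
    have f3 : partFactor (4 * N + 2 + 1) = 1 + Qv ^ N * (s₁ * r₀ * s₀) := by
      rw [hodd (by omega), s₁_mul_r₀_mul_s₀_eq, Qv_pow_mul_partWeight]
    have f4 : partFactor (4 * N + 2 + 1 + 1) = (1 - Qv ^ (N + 1))⁻¹ := by
      rw [heven (by omega), pow_succ]
      nth_rewrite 2 [Qv_eq]
      rw [Qv_pow_mul_partWeight]
    have f5 : partFactor (4 * N + 2 + 1 + 1 + 1) = 1 + Qv ^ (N + 1) * s₁ := by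
      rw [hodd (by omega), s₁_eq, Qv_pow_mul_partWeight]
      rfl
    have f6 : partFactor (4 * N + 2 + 1 + 1 + 1 + 1) = (1 - Qv ^ (N + 1) * (r₀ * s₁))⁻¹ := by
      rw [heven (by omega), r₀_mul_s₁_eq, Qv_pow_mul_partWeight]
      rfl
    rw [show 4 * (N + 1) + 2 = 4 * N + 2 + 1 + 1 + 1 + 1 by ring, prod_Icc_succ_top (by omega),
      prod_Icc_succ_top (by omega), prod_Icc_succ_top (by omega), prod_Icc_succ_top (by omega),
      ← ih, f3, f4, f5, f6, prod_range_succ, prod_range_succ, ← mul_assoc (1 - r₀ * s₁),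
      MvPowerSeries.mul_inv_rev, MvPowerSeries.mul_inv_rev]
    ring

/-- Refined generating function for partitions with distinct odd parts, tracking parts
by residue class mod 4:  the sum of weights over partitions of `n` with distinct odd
parts equals
`(1+s₁)∏_{m≥1}(1+Q^m s₁)(1+Q^{m-1}s₁r₀s₀) / [(1-r₀s₁)∏_{m≥1}(1-Q^m)(1-Q^m r₀s₁)]`,
where `Q = r₀r₁s₀s₁` and `(1+Q^m r₁⁻¹) = (1+Q^{m-1}s₁r₀s₀)`.  Stated coefficientwise
with the products truncated at `N` factors, for monomials `d` of total degree `n < N`. -/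
theorem refined_distinct_odd_gf (n N : ℕ) (h : n < N) (d : Fin 4 →₀ ℕ)
    (hd : (d.sum fun _ v => v) = n) :
    MvPowerSeries.coeff (R := ℚ) d
      ((1 + s₁) *
        (∏ m ∈ Finset.range N, ((1 + Qv ^ (m + 1) * s₁) * (1 + Qv ^ m * (s₁ * r₀ * s₀)))) *
        ((1 - r₀ * s₁) *
          ∏ m ∈ Finset.range N, ((1 - Qv ^ (m + 1)) * (1 - Qv ^ (m + 1) * (r₀ * s₁))))⁻¹) =
    Nat.card {p : n.Partition //
      (∀ i, Odd i → p.parts.count i ≤ 1) ∧ (p.parts.map wtexp).sum = d} := by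
  have hs0 : 0 ∉ Icc 1 (4 * N + 2) := by simp
  rw [truncated_gf_eq_prod_partFactor,
    prod_congr rfl fun k hk => partFactor_eq_indicator (ne_of_mem_of_not_mem hk hs0),
    Nat.Partition.coeff_prod_indicator_eq_card degree_wtexp hs0 (Icc_subset_Icc_right (by omega))
      hd allowedCounts fun i _ => mem_allowedCounts.mpr fun _ => zero_le_one]
  simp only [mem_allowedCounts]

end RefinedGF
end

section
/- Stability constraint on multiplicities as partition condition: a weakly decreasing sequence of nonnegative integers (m₁ ≥ m₂ ≥ ⋯) in which consecutive values satisfy m_i - m_{i+1} ∈ {0,1} corresponds bijectively, via conjugation, to a partition whose parts are the column lengths, and the condition 'any two adjacent edges in a common inside hexagon have multiplicities equal or differing by one' for ALL pairs (m_{2i-1}, m_{2i}) is equivalent to the conjugate partition having all odd parts distinct. -/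
/-!
For an antitone `m` vanishing from `N` on, the conjugate value `#{i < N : j + 1 ≤ m i}`
equals `n + 1` exactly when `m (n + 1) ≤ j < m n`. Hence the odd value `2k + 1` occurs
exactly `m (2k) - m (2k + 1)` times among the conjugate parts, and it occurs at most once
iff `m (2k)` and `m (2k + 1)` differ by at most one.
-/

open Finset

section Conjugate

variable {N : ℕ} {m : ℕ → ℕ}

lemma exists_le_of_eventually_zero (hsupp : ∀ i, N ≤ i → m i = 0) (j : ℕ) :
    ∃ i, m i ≤ j :=
  ⟨N, by simp [hsupp N le_rfl]⟩

lemma filter_succ_le_eq_range_find (hm : Antitone m) (hsupp : ∀ i, N ≤ i → m i = 0)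
    (j : ℕ) :
    (range N).filter (fun i => j + 1 ≤ m i) =
      range (Nat.find (exists_le_of_eventually_zero hsupp j)) := by
  ext i
  simp only [mem_filter, mem_range, Nat.lt_find_iff, not_le]
  constructor
  · rintro ⟨-, hi⟩ k hk
    exact Nat.lt_of_succ_le (hi.trans (hm hk))
  · intro h
    have hi : j < m i := h i le_rfl
    refine ⟨?_, hi⟩
    by_contra hN
    simp [hsupp i (not_lt.mp hN)] at hi

lemma card_filter_succ_le_eq_succ_iff (hm : Antitone m) (hsupp : ∀ i, N ≤ i → m i = 0)
    (j n : ℕ) :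
    ((range N).filter (fun i => j + 1 ≤ m i)).card = n + 1 ↔ m (n + 1) ≤ j ∧ j < m n := by
  rw [filter_succ_le_eq_range_find hm hsupp, card_range, Nat.find_eq_iff]
  simp only [not_le, Nat.lt_succ_iff]
  exact and_congr_right fun _ => ⟨fun h => h n le_rfl, fun h k hk => h.trans_le (hm hk)⟩

lemma filter_conjugate_eq_succ_eq_Ico (hm : Antitone m) (hsupp : ∀ i, N ≤ i → m i = 0)
    (n : ℕ) :
    (range (m 0 + 1)).filter
        (fun j => ((range N).filter (fun i => j + 1 ≤ m i)).card = n + 1) =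
      Ico (m (n + 1)) (m n) := by
  ext j
  simp only [mem_filter, mem_range, mem_Ico, card_filter_succ_le_eq_succ_iff hm hsupp]
  have := hm (Nat.zero_le n)
  omega

end Conjugate

/-- Stability constraint on multiplicities as a partition condition.  Let
`m₀ ≥ m₁ ≥ ⋯` be a weakly decreasing sequence of nonnegative integers (inside
thickenings along a branch) vanishing from index `N` on, and let
`μ j = #{i < N : m i ≥ j}` be its conjugate partition.  Then the multiplicities of
each pair of adjacent edges lying in a common inside hexagon are equal or differ by one
— i.e. `m (2i) = m (2i+1)` or `m (2i) = m (2i+1) + 1` for all `i` (1-indexed pairs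
`(m_{2i-1}, m_{2i})`) — if and only if all odd parts of the conjugate partition `μ`
are distinct (every odd value occurs at most once among `μ 1, μ 2, …`). -/
theorem multiplicity_pairs_iff_conjugate_distinct_odd
    (N : ℕ) (m : ℕ → ℕ)
    (hdec : ∀ i j, i ≤ j → m j ≤ m i)
    (hsupp : ∀ i, N ≤ i → m i = 0) :
    (∀ i : ℕ, m (2 * i) = m (2 * i + 1) ∨ m (2 * i) = m (2 * i + 1) + 1) ↔
    (∀ v, Odd v →
      ((Finset.range (m 0 + 1)).filter
        (fun j => ((Finset.range N).filter (fun i => j + 1 ≤ m i)).card = v)).card ≤ 1) := by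
  have hm : Antitone m := fun i j h => hdec i j h
  calc (∀ i : ℕ, m (2 * i) = m (2 * i + 1) ∨ m (2 * i) = m (2 * i + 1) + 1)
      ↔ ∀ k, m (2 * k) - m (2 * k + 1) ≤ 1 :=
        forall_congr' fun k => by
          have := hdec (2 * k) (2 * k + 1) (Nat.le_succ _)
          omega
    _ ↔ ∀ k, ((range (m 0 + 1)).filter
          (fun j => ((range N).filter (fun i => j + 1 ≤ m i)).card = 2 * k + 1)).card ≤ 1 := by
        simp only [filter_conjugate_eq_succ_eq_Ico hm hsupp, Nat.card_Ico]
    _ ↔ _ := ⟨fun h v ⟨k, hv⟩ => hv ▸ h k, fun h k => h _ (odd_two_mul_add_one k)⟩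
end
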